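/- arXiv:2602.21844 — 2 statements merged into one kernel-verified Lean document; each statement's English description precedes it below -/
import Mathlib

section
/- Let v, v' ∈ ℝ^N be two vectors of positive virtual costs agreeing in every coordinate except the i-th, with v'ᵢ > vᵢ. Let (p, ε) be a minimizer of Problem 3 with virtual costs v and let (p', ε') be a minimizer of Problem 3 with virtual costs v'. Then ε'ᵢ ≤ εᵢ; in particular, the optimal privacy budget of client i is weakly decreasing in its virtual cost. -/
open Finset MeasureTheory Real

/-- Differential-privacy error term: sum over clients with nonzero selection
probability of `pₖ² / εₖ²`. -/
noncomputable def dpError {N : ℕ} (p ε : Fin N → ℝ) : ℝ :=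
  ∑ k, if p k ≠ 0 then (p k) ^ 2 / (ε k) ^ 2 else 0

/-- Objective of Problem 3:
`G(p,ε) = η(‖p−pᵘ‖₁ + √(‖p−pᵘ‖₁² + Q·Σ_{pₖ≠0} pₖ²/εₖ²)) + Σₖ εₖ vₖ`,
where `pᵘ = (1/N,…,1/N)`. -/
noncomputable def objG {N : ℕ} (η Q : ℝ) (v p ε : Fin N → ℝ) : ℝ :=
  η * ((∑ k, |p k - 1 / (N : ℝ)|) +
      Real.sqrt ((∑ k, |p k - 1 / (N : ℝ)|) ^ 2 + Q * dpError p ε)) +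
    ∑ k, ε k * v k

/-- Feasible set of Problem 3: `Σₖ pₖ = 1`, `pₖ ≥ 0`, `εₖ ≥ 0`, and `εₖ > 0`
whenever `pₖ > 0`. -/
def Feasible {N : ℕ} (p ε : Fin N → ℝ) : Prop :=
  (∑ k, p k = 1) ∧ (∀ k, 0 ≤ p k) ∧ (∀ k, 0 ≤ ε k) ∧ (∀ k, 0 < p k → 0 < ε k)

/-- `(p, ε)` is a minimizer of Problem 3 with virtual costs `v`. -/
def IsMinimizer {N : ℕ} (η Q : ℝ) (v p ε : Fin N → ℝ) : Prop :=
  Feasible p ε ∧ ∀ q e : Fin N → ℝ, Feasible q e → objG η Q v p ε ≤ objG η Q v q e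

/-! Revealed preference: the objective depends on the costs only through the linear term
`∑ εₖ vₖ`, so comparing each minimizer with the other one's optimum gives
`∑ ε'ₖ (v'ₖ - vₖ) ≤ ∑ εₖ (v'ₖ - vₖ)`. When the costs differ only at `i`, this reads
`ε'ᵢ (v'ᵢ - vᵢ) ≤ εᵢ (v'ᵢ - vᵢ)`. -/

theorem objG_sub_objG {N : ℕ} (η Q : ℝ) (v v' p ε : Fin N → ℝ) :
    objG η Q v' p ε - objG η Q v p ε = ∑ k, ε k * (v' k - v k) := by
  simp only [objG, mul_sub, sum_sub_distrib]
  ring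

theorem IsMinimizer.sum_mul_sub_le {N : ℕ} {η Q : ℝ} {v v' p ε p' ε' : Fin N → ℝ}
    (hmin : IsMinimizer η Q v p ε) (hmin' : IsMinimizer η Q v' p' ε') :
    ∑ k, ε' k * (v' k - v k) ≤ ∑ k, ε k * (v' k - v k) := by
  have h := hmin.2 p' ε' hmin'.1
  have h' := hmin'.2 p ε hmin.1
  rw [← objG_sub_objG η Q v v' p' ε', ← objG_sub_objG η Q v v' p ε]
  linarith

theorem sum_mul_sub_eq_single {N : ℕ} {v v' : Fin N → ℝ} {i : Fin N}
    (hvv' : ∀ k, k ≠ i → v k = v' k) (e : Fin N → ℝ) :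
    ∑ k, e k * (v' k - v k) = e i * (v' i - v i) :=
  sum_eq_single_of_mem i (mem_univ i) fun k _ hk => by rw [hvv' k hk, sub_self, mul_zero]

theorem budget_monotone_in_virtual_cost_general
    {N : ℕ} (η Q : ℝ)
    (i : Fin N) (v v' : Fin N → ℝ)
    (hvv' : ∀ k, k ≠ i → v k = v' k) (hvi : v i < v' i)
    (p ε p' ε' : Fin N → ℝ)
    (hmin : IsMinimizer η Q v p ε) (hmin' : IsMinimizer η Q v' p' ε') :
    ε' i ≤ ε i := by
  have key := hmin.sum_mul_sub_le hmin'
  rw [sum_mul_sub_eq_single hvv', sum_mul_sub_eq_single hvv'] at key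
  exact le_of_mul_le_mul_right key (sub_pos.mpr hvi)

/-- If `v` and `v'` are positive virtual-cost vectors agreeing
off coordinate `i` with `v'ᵢ > vᵢ`, and `(p, ε)`, `(p', ε')` are minimizers of
Problem 3 with costs `v`, `v'` respectively, then `ε'ᵢ ≤ εᵢ`: the optimal
privacy budget of client `i` weakly decreases in its virtual cost. -/
theorem budget_monotone_in_virtual_cost
    {N : ℕ} (hN : 2 ≤ N) (η Q : ℝ) (hη : 0 < η) (hQ : 0 < Q)
    (i : Fin N) (v v' : Fin N → ℝ)
    (hv_pos : ∀ k, 0 < v k) (hv'_pos : ∀ k, 0 < v' k)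
    (hvv' : ∀ k, k ≠ i → v k = v' k) (hvi : v i < v' i)
    (p ε p' ε' : Fin N → ℝ)
    (hmin : IsMinimizer η Q v p ε) (hmin' : IsMinimizer η Q v' p' ε') :
    ε' i ≤ ε i :=
  budget_monotone_in_virtual_cost_general η Q i v v' hvv' hvi p ε p' ε' hmin hmin'
end

section
/- Let (p*, ε*) be any minimizer of Problem 3. If client i satisfies p*ᵢ > 1/N and client j satisfies p*ⱼ = 1/N, then vᵢ ≤ vⱼ; that is, the over-selected client has a virtual cost no larger than that of any unbiasedly selected client. -/
open Finset MeasureTheory Real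

/-!
Suppose `v j < v i`. Three perturbations of a minimizer, each changing only the
coordinates `i` and `j`, rule out every order between `εᵢ` and `εⱼ`: swapping both
`(pᵢ, εᵢ)` and `(pⱼ, εⱼ)` changes only the cost term, by `(εⱼ - εᵢ)(vᵢ - vⱼ)`, so
`εᵢ ≤ εⱼ`; swapping only `pᵢ` and `pⱼ` changes only the privacy error, by
`(pᵢ² - pⱼ²)(1/εⱼ² - 1/εᵢ²)`, so `εⱼ ≤ εᵢ`; and once `εᵢ = εⱼ`, replacing `pᵢ` and
`pⱼ` by their mean keeps `‖p - pᵘ‖₁` (both lie on the same side of `1/N`) but strictly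
lowers the privacy error.
-/

theorem Fintype.sum_sub_sum_of_eq_off_pair {ι M : Type*} [Fintype ι] [AddCommGroup M]
    {i j : ι} (hij : i ≠ j) {f g : ι → M} (h : ∀ k, k ≠ i → k ≠ j → f k = g k) :
    ∑ k, f k - ∑ k, g k = (f i - g i) + (f j - g j) := by
  rw [← Finset.sum_sub_distrib]
  exact Fintype.sum_eq_add i j hij fun k hk => sub_eq_zero.mpr (h k hk.1 hk.2)

section Problem3

variable {N : ℕ}

theorem dpError_eq_sum (p ε : Fin N → ℝ) : dpError p ε = ∑ k, p k ^ 2 / ε k ^ 2 := by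
  refine Finset.sum_congr rfl fun k _ => ?_
  split_ifs with hk
  · rfl
  · simp [not_not.mp hk]

theorem dpError_comp_perm (σ : Equiv.Perm (Fin N)) (p ε : Fin N → ℝ) :
    dpError (p ∘ σ) (ε ∘ σ) = dpError p ε := by
  simp only [dpError_eq_sum]
  exact Equiv.sum_comp σ fun k => p k ^ 2 / ε k ^ 2

theorem Feasible.comp_perm {p ε : Fin N → ℝ} (h : Feasible p ε) (σ : Equiv.Perm (Fin N)) :
    Feasible (p ∘ σ) (ε ∘ σ) := by
  obtain ⟨hsum, hp, hε, hpε⟩ := h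
  exact ⟨(Equiv.sum_comp σ p).trans hsum, fun k => hp (σ k), fun k => hε (σ k),
    fun k => hpε (σ k)⟩

theorem Feasible.of_eq_off_pair {p q ε : Fin N → ℝ} {i j : Fin N} (h : Feasible p ε)
    (hεi : 0 < ε i) (hεj : 0 < ε j) (hq : ∀ k, 0 ≤ q k) (hsum : ∑ k, q k = ∑ k, p k)
    (hoff : ∀ k, k ≠ i → k ≠ j → q k = p k) : Feasible q ε := by
  refine ⟨hsum.trans h.1, hq, h.2.2.1, fun k hk => ?_⟩
  by_cases hki : k = i
  · exact hki ▸ hεi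
  by_cases hkj : k = j
  · exact hkj ▸ hεj
  exact h.2.2.2 k (hoff k hki hkj ▸ hk)

theorem objG_lt_objG_of_cost_lt {η Q : ℝ} {v p q ε e : Fin N → ℝ}
    (hS : ∑ k, |q k - 1 / (N : ℝ)| = ∑ k, |p k - 1 / (N : ℝ)|)
    (hD : dpError q e = dpError p ε) (hC : ∑ k, e k * v k < ∑ k, ε k * v k) :
    objG η Q v q e < objG η Q v p ε := by
  unfold objG
  rw [hS, hD]
  exact add_lt_add_right hC _

theorem objG_lt_objG_of_dpError_lt {η Q : ℝ} (hη : 0 < η) (hQ : 0 < Q) {v p q ε : Fin N → ℝ}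
    (hS : ∑ k, |q k - 1 / (N : ℝ)| = ∑ k, |p k - 1 / (N : ℝ)|)
    (hD : dpError q ε < dpError p ε) : objG η Q v q ε < objG η Q v p ε := by
  have hD0 : 0 ≤ dpError q ε := by rw [dpError_eq_sum]; positivity
  unfold objG
  rw [hS]
  gcongr

namespace IsMinimizer

variable {η Q : ℝ} {v p ε : Fin N → ℝ} {i j : Fin N}

theorem not_objG_lt (hmin : IsMinimizer η Q v p ε) {q e : Fin N → ℝ} (h : Feasible q e) :
    ¬ objG η Q v q e < objG η Q v p ε :=
  not_lt.mpr (hmin.2 q e h)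

theorem eps_le_eps_of_cost_lt (hmin : IsMinimizer η Q v p ε) (hv : v j < v i) : ε i ≤ ε j := by
  by_contra! hε
  have hij : i ≠ j := fun h => (h ▸ hv).false
  set σ := Equiv.swap i j
  have hC : ∑ k, (ε ∘ σ) k * v k - ∑ k, ε k * v k = (ε j - ε i) * (v i - v j) := by
    rw [Fintype.sum_sub_sum_of_eq_off_pair hij fun k hki hkj => by
      simp [σ, Equiv.swap_apply_of_ne_of_ne hki hkj]]
    simp only [Function.comp_apply, σ, Equiv.swap_apply_left, Equiv.swap_apply_right]
    ring
  have hlt : ∑ k, (ε ∘ σ) k * v k < ∑ k, ε k * v k :=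
    sub_neg.mp (hC ▸ mul_neg_of_neg_of_pos (sub_neg.mpr hε) (sub_pos.mpr hv))
  exact hmin.not_objG_lt (hmin.1.comp_perm σ) (objG_lt_objG_of_cost_lt
    (Equiv.sum_comp σ fun k => |p k - 1 / (N : ℝ)|) (dpError_comp_perm σ p ε) hlt)

theorem eps_le_eps_of_lt (hη : 0 < η) (hQ : 0 < Q) (hmin : IsMinimizer η Q v p ε)
    (hpj : 0 < p j) (hp : p j < p i) : ε j ≤ ε i := by
  by_contra! hε
  have hij : i ≠ j := fun h => (h ▸ hp).false
  have hεi : 0 < ε i := hmin.1.2.2.2 i (hpj.trans hp)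
  have hεj : 0 < ε j := hmin.1.2.2.2 j hpj
  set σ := Equiv.swap i j
  have hoff : ∀ k, k ≠ i → k ≠ j → (p ∘ σ) k = p k := fun k hki hkj => by
    simp [σ, Equiv.swap_apply_of_ne_of_ne hki hkj]
  have hD : dpError (p ∘ σ) ε - dpError p ε
      = (p i ^ 2 - p j ^ 2) * (1 / ε j ^ 2 - 1 / ε i ^ 2) := by
    simp only [dpError_eq_sum]
    rw [Fintype.sum_sub_sum_of_eq_off_pair hij fun k hki hkj => by rw [hoff k hki hkj]]
    simp only [Function.comp_apply, σ, Equiv.swap_apply_left, Equiv.swap_apply_right]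
    ring
  have hinv : 1 / ε j ^ 2 < 1 / ε i ^ 2 := one_div_lt_one_div_of_lt (by positivity)
    (pow_lt_pow_left₀ hε hεi.le two_ne_zero)
  have hlt : dpError (p ∘ σ) ε < dpError p ε :=
    sub_neg.mp (hD ▸ mul_neg_of_pos_of_neg (by nlinarith) (sub_neg.mpr hinv))
  exact hmin.not_objG_lt (hmin.1.of_eq_off_pair hεi hεj (fun k => hmin.1.2.1 (σ k))
    (Equiv.sum_comp σ p) hoff) (objG_lt_objG_of_dpError_lt hη hQ
    (Equiv.sum_comp σ fun k => |p k - 1 / (N : ℝ)|) hlt)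

theorem eps_ne_eps_of_lt (hη : 0 < η) (hQ : 0 < Q) (hmin : IsMinimizer η Q v p ε)
    (hj : 1 / (N : ℝ) ≤ p j) (hp : p j < p i) : ε i ≠ ε j := by
  intro hε
  have hij : i ≠ j := fun h => (h ▸ hp).false
  have hpj : 0 < p j := (one_div_pos.mpr (Nat.cast_pos.mpr j.pos)).trans_le hj
  have hεi : 0 < ε i := hmin.1.2.2.2 i (hpj.trans hp)
  set m := (p i + p j) / 2 with hm
  set q := Function.update (Function.update p i m) j m
  have hqi : q i = m := by simp [q, hij]
  have hqj : q j = m := by simp [q]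
  have hoff : ∀ k, k ≠ i → k ≠ j → q k = p k := fun k hki hkj => by simp [q, hki, hkj]
  have hq : ∀ k, 0 ≤ q k := fun k => by
    by_cases hki : k = i
    · subst hki; rw [hqi]; linarith
    by_cases hkj : k = j
    · subst hkj; rw [hqj]; linarith
    · rw [hoff k hki hkj]; exact hmin.1.2.1 k
  have hsum : ∑ k, q k = ∑ k, p k := by
    have := Fintype.sum_sub_sum_of_eq_off_pair hij hoff
    rw [hqi, hqj] at this
    linarith
  have hS : ∑ k, |q k - 1 / (N : ℝ)| = ∑ k, |p k - 1 / (N : ℝ)| := by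
    have := Fintype.sum_sub_sum_of_eq_off_pair hij fun k hki hkj =>
      congrArg (fun x => |x - 1 / (N : ℝ)|) (hoff k hki hkj)
    simp only [hqi, hqj] at this
    rw [abs_of_nonneg (by linarith), abs_of_nonneg (by linarith [hm]),
      abs_of_nonneg (by linarith [hm])] at this
    linarith
  have hD : dpError q ε - dpError p ε = -((p i - p j) ^ 2 / (2 * ε i ^ 2)) := by
    simp only [dpError_eq_sum]
    rw [Fintype.sum_sub_sum_of_eq_off_pair hij fun k hki hkj => by rw [hoff k hki hkj],
      hqi, hqj, ← hε]
    field_simp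
    ring
  have hlt : dpError q ε < dpError p ε := by
    have := sub_pos.mpr hp
    exact sub_neg.mp (hD ▸ neg_neg_of_pos (by positivity))
  exact hmin.not_objG_lt (hmin.1.of_eq_off_pair hεi (hε ▸ hεi) hq hsum hoff)
    (objG_lt_objG_of_dpError_lt hη hQ hS hlt)

end IsMinimizer

end Problem3

theorem over_selected_has_smaller_cost_general
    {N : ℕ} (v : Fin N → ℝ)
    (η Q : ℝ) (hη : 0 < η) (hQ : 0 < Q)
    (p ε : Fin N → ℝ) (hmin : IsMinimizer η Q v p ε)
    (i j : Fin N) (hi : 1 / (N : ℝ) < p i) (hj : p j = 1 / (N : ℝ)) :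
    v i ≤ v j := by
  have hp : p j < p i := hj ▸ hi
  have hpj : 0 < p j := hj ▸ one_div_pos.mpr (Nat.cast_pos.mpr j.pos)
  by_contra! hv
  exact hmin.eps_ne_eps_of_lt hη hQ hj.ge hp
    (le_antisymm (hmin.eps_le_eps_of_cost_lt hv) (hmin.eps_le_eps_of_lt hη hQ hpj hp))

/-- At a minimizer of Problem 3, if client `i` is over-selected
(`pᵢ > 1/N`) and client `j` is unbiasedly selected (`pⱼ = 1/N`), then
`vᵢ ≤ vⱼ`. -/
theorem over_selected_has_smaller_cost
    {N : ℕ} (hN : 2 ≤ N) (v : Fin N → ℝ)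
    (hv_pos : ∀ k, 0 < v k) (hv_inj : Function.Injective v)
    (η Q : ℝ) (hη : 0 < η) (hQ : 0 < Q)
    (p ε : Fin N → ℝ) (hmin : IsMinimizer η Q v p ε)
    (i j : Fin N) (hi : 1 / (N : ℝ) < p i) (hj : p j = 1 / (N : ℝ)) :
    v i ≤ v j :=
  over_selected_has_smaller_cost_general v η Q hη hQ p ε hmin i j hi hj
end
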